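/- Let p, q, a, b be four distinct concyclic points in the plane such that a and b lie in opposite open halfplanes bounded by the line through p and q. Then p and q lie in opposite open halfplanes bounded by the line through a and b. -/
import Mathlib

noncomputable section

/-- Points of the Euclidean plane. -/
abbrev Pt := EuclideanSpace ℝ (Fin 2)

/-- The orientation (cross product) determinant of the triple `(p, q, r)`. -/
def orient (p q r : Pt) : ℝ :=
  (q 0 - p 0) * (r 1 - p 1) - (q 1 - p 1) * (r 0 - p 0)

lemma key_id (p1 p2 q1 q2 a1 a2 b1 b2 r : ℝ)
    (hP : p1^2 + p2^2 = r) (hQ : q1^2 + q2^2 = r)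
    (hA : a1^2 + a2^2 = r) (hB : b1^2 + b2^2 = r) :
    ((b1-a1)*(p2-a2)-(b2-a2)*(p1-a1)) * ((b1-a1)*(q2-a2)-(b2-a2)*(q1-a1)) * ((p1-q1)^2+(p2-q2)^2)
    = ((q1-p1)*(a2-p2)-(q2-p2)*(a1-p1)) * ((q1-p1)*(b2-p2)-(q2-p2)*(b1-p1)) * ((a1-b1)^2+(a2-b2)^2) := by
  linear_combination
    ((-1)*a2*b2^3 + (-1)*a2*b1^2*b2 + (2)*a2^2*b2^2 + (1)*a2^2*b1^2 + (-1)*a2^3*b2 + (1)*a1^2*b2^2 + (-1)*a1^2*a2*b2 + (1)*q2*b2^3 + (1)*q2*b1^2*b2 + (-1)*q2*a2*b2^2 + (-1)*q2*a2^2*b2 + (1)*q2*a2^3 + (-1)*q2*a1*b1*b2 + (-1)*q2*a1*a2*b1 + (1)*q2*a1^2*a2 + (-1)*q2^2*b2^2 + (-1)*q2^2*b1^2 + (2)*q2^2*a2*b2 + (-1)*q2^2*a2^2 + (2)*q2^2*a1*b1 + (-1)*q2^2*a1^2 + (-1)*q1*a2*b1*b2 + (1)*q1*a2^2*b1 + (1)*q1*a1*b2^2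 + (-1)*q1*a1*a2*b2 + (2)*q1*q2*b1*b2 + (-2)*q1*q2*a2*b1 + (-2)*q1*q2*a1*b2 + (2)*q1*q2*a1*a2 + (-2)*q1^2*b2^2 + (4)*q1^2*a2*b2 + (-2)*q1^2*a2^2 + (-1)*p2*a2*b1^2 + (1)*p2*a1*b1*b2 + (1)*p2*a1*a2*b1 + (-1)*p2*a1^2*b2 + (1)*p2*q2*b1^2 + (-2)*p2*q2*a1*b1 + (1)*p2*q2*a1^2 + (-1)*p2*q1*b1*b2 + (1)*p2*q1*a2*b1 + (1)*p2*q1*a1*b2 + (-1)*p2*q1*a1*a2 + (1)*p1*a2*b1*b2 + (-1)*p1*a2^2*b1 + (-1)*p1*a1*b2^2 + (1)*p1*a1*a2*b2 + (-1)*p1*q2*b1*b2 + (1)*p1*q2*a2*b1 + (1)*p1*q2*a1*b2 + (-1)*p1*q2*a1*a2 + (1)*p1*q1*b2^2 + (-2)*p1*q1*a2*b2 + (1)*p1*q1*a2^2) * hP +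
    ((-2)*b2^2*r + (4)*a2*b2*r + (-1)*a2*b2^3 + (-1)*a2*b1^2*b2 + (-2)*a2^2*r + (2)*a2^2*b2^2 + (1)*a2^2*b1^2 + (-1)*a2^3*b2 + (1)*a1^2*b2^2 + (-1)*a1^2*a2*b2 + (-1)*q2*a2*b1^2 + (1)*q2*a1*b1*b2 + (1)*q2*a1*a2*b1 + (-1)*q2*a1^2*b2 + (1)*q1*a2*b1*b2 + (-1)*q1*a2^2*b1 + (-1)*q1*a1*b2^2 + (1)*q1*a1*a2*b2 + (1)*p2*b2^3 + (1)*p2*b1^2*b2 + (-1)*p2*a2*b2^2 + (-1)*p2*a2^2*b2 + (1)*p2*a2^3 + (-1)*p2*a1*b1*b2 + (-1)*p2*a1*a2*b1 + (1)*p2*a1^2*a2 + (1)*p2*q2*b1^2 + (-2)*p2*q2*a1*b1 + (1)*p2*q2*a1^2 + (-1)*p2*q1*b1*b2 + (1)*p2*q1*a2*b1 + (1)*p2*q1*a1*b2 + (-1)*p2*q1*a1*a2 + (1)*p2^2*b2^2 + (-1)*p2^2*b1^2 + (-2)*p2^2*a2*b2 + (1)*p2^2*a2^2 + (2)*p2^2*a1*b1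 + (-1)*p2^2*a1^2 + (-1)*p1*a2*b1*b2 + (1)*p1*a2^2*b1 + (1)*p1*a1*b2^2 + (-1)*p1*a1*a2*b2 + (-1)*p1*q2*b1*b2 + (1)*p1*q2*a2*b1 + (1)*p1*q2*a1*b2 + (-1)*p1*q2*a1*a2 + (1)*p1*q1*b2^2 + (-2)*p1*q1*a2*b2 + (1)*p1*q1*a2^2 + (2)*p1*p2*b1*b2 + (-2)*p1*p2*a2*b1 + (-2)*p1*p2*a1*b2 + (2)*p1*p2*a1*a2) * hQ +
    ((2)*b2^2*r + (-2)*a2*b2*r + (-1)*q2*b2*r + (1)*q2*a2*r + (-1)*q2^2*r + (2)*q2^2*b1^2 + (1)*q2^2*a2*b2 + (-1)*q2^2*a1*b1 + (-2)*q1*q2*b1*b2 + (1)*q1*q2*a2*b1 + (1)*q1*q2*a1*b2 + (-1)*p2*b2*r + (1)*p2*a2*r + (2)*p2*q2*r + (-2)*p2*q2*b2^2 + (-4)*p2*q2*b1^2 + (2)*p2*q2*a1*b1 + (1)*p2*q2^2*b2 + (-1)*p2*q2^2*a2 + (2)*p2*q1*b1*b2 + (-1)*p2*q1*a2*b1 +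 (-1)*p2*q1*a1*b2 + (1)*p2*q1*q2*b1 + (-1)*p2*q1*q2*a1 + (-1)*p2^2*r + (2)*p2^2*b1^2 + (1)*p2^2*a2*b2 + (-1)*p2^2*a1*b1 + (1)*p2^2*q2*b2 + (-1)*p2^2*q2*a2 + (-1)*p2^2*q1*b1 + (1)*p2^2*q1*a1 + (2)*p1*q2*b1*b2 + (-1)*p1*q2*a2*b1 + (-1)*p1*q2*a1*b2 + (-1)*p1*q2^2*b1 + (1)*p1*q2^2*a1 + (-2)*p1*q1*b2^2 + (2)*p1*q1*a2*b2 + (1)*p1*q1*q2*b2 + (-1)*p1*q1*q2*a2 + (-2)*p1*p2*b1*b2 + (1)*p1*p2*a2*b1 + (1)*p1*p2*a1*b2 + (1)*p1*p2*q2*b1 + (-1)*p1*p2*q2*a1 + (1)*p1*p2*q1*b2 + (-1)*p1*p2*q1*a2) * hA +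
    ((-2)*a2*b2*r + (2)*a2^2*r + (1)*q2*b2*r + (-1)*q2*a2*r + (1)*q2^2*r + (1)*q2^2*a2*b2 + (-2)*q2^2*a2^2 + (-1)*q2^2*a1*b1 + (1)*q1*q2*a2*b1 + (1)*q1*q2*a1*b2 + (-2)*q1*q2*a1*a2 + (1)*p2*b2*r + (-1)*p2*a2*r + (-2)*p2*q2*r + (2)*p2*q2*a2^2 + (2)*p2*q2*a1*b1 + (-1)*p2*q2^2*b2 + (1)*p2*q2^2*a2 + (-1)*p2*q1*a2*b1 + (-1)*p2*q1*a1*b2 + (2)*p2*q1*a1*a2 + (-1)*p2*q1*q2*b1 + (1)*p2*q1*q2*a1 + (1)*p2^2*r + (1)*p2^2*a2*b2 + (-2)*p2^2*a2^2 + (-1)*p2^2*a1*b1 + (-1)*p2^2*q2*b2 + (1)*p2^2*q2*a2 + (1)*p2^2*q1*b1 + (-1)*p2^2*q1*a1 + (-1)*p1*q2*a2*b1 + (-1)*p1*q2*a1*b2 + (2)*p1*q2*a1*a2 + (1)*p1*q2^2*b1 + (-1)*p1*q2^2*a1 + (2)*p1*q1*a2*b2 + (-2)*p1*q1*a2^2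 + (-1)*p1*q1*q2*b2 + (1)*p1*q1*q2*a2 + (1)*p1*p2*a2*b1 + (1)*p1*p2*a1*b2 + (-2)*p1*p2*a1*a2 + (-1)*p1*p2*q2*b1 + (1)*p1*p2*q2*a1 + (-1)*p1*p2*q1*b2 + (1)*p1*p2*q1*a2) * hB

lemma coord_of_dist (x c : Pt) (ρ : ℝ) (hx : dist x c = ρ) :
    (x 0 - c 0)^2 + (x 1 - c 1)^2 = ρ^2 := by
  have h := EuclideanSpace.dist_eq x c
  rw [Fin.sum_univ_two, hx] at h
  have h2 : ρ^2 = (x 0 - c 0)^2 + (x 1 - c 1)^2 := by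
    rw [h, Real.sq_sqrt (by positivity)]
    simp [Real.dist_eq, sq_abs]
  linarith

set_option maxHeartbeats 1000000 in
/-- If four distinct concyclic points `p, q, a, b` are such that `a, b` lie in opposite
open halfplanes bounded by the line `pq`, then `p, q` lie in opposite open halfplanes
bounded by the line `ab`. -/
theorem stmt8 (p q a b c : Pt) (ρ : ℝ) (hρ : 0 < ρ)
    (hp : dist p c = ρ) (hq : dist q c = ρ) (ha : dist a c = ρ) (hb : dist b c = ρ)
    (hpq : p ≠ q) (hpa : p ≠ a) (hpb : p ≠ b) (hqa : q ≠ a) (hqb : q ≠ b) (hab : a ≠ b)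
    (hsep : orient p q a * orient p q b < 0) :
    orient a b p * orient a b q < 0 := by
  have hP := coord_of_dist p c ρ hp
  have hQ := coord_of_dist q c ρ hq
  have hA := coord_of_dist a c ρ ha
  have hB := coord_of_dist b c ρ hb
  have hdpq : 0 < (p 0 - q 0)^2 + (p 1 - q 1)^2 := by
    have h1 : 0 < dist p q := dist_pos.2 hpq
    have h2 := coord_of_dist p q (dist p q) rfl
    nlinarith
  have hdab : 0 < (a 0 - b 0)^2 + (a 1 - b 1)^2 := by
    have h1 : 0 < dist a b := dist_pos.2 hab
    have h2 := coord_of_dist a b (dist a b) rfl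
    nlinarith
  have key := key_id (p 0 - c 0) (p 1 - c 1) (q 0 - c 0) (q 1 - c 1)
      (a 0 - c 0) (a 1 - c 1) (b 0 - c 0) (b 1 - c 1) (ρ^2) hP hQ hA hB
  have key2 : orient a b p * orient a b q * ((p 0 - q 0)^2 + (p 1 - q 1)^2)
      = orient p q a * orient p q b * ((a 0 - b 0)^2 + (a 1 - b 1)^2) := by
    simp only [orient]
    linear_combination key
  have h3 : orient a b p * orient a b q * ((p 0 - q 0)^2 + (p 1 - q 1)^2) < 0 := by
    rw [key2]
    exact mul_neg_of_neg_of_pos hsep hdab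
  by_contra hcon
  push_neg at hcon
  have := mul_nonneg hcon (le_of_lt hdpq)
  linarith
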